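/- arXiv:2410.12982 — 3 statements merged into one kernel-verified Lean document; each statement's English description precedes it below -/
import Mathlib

section
/- For every integer P ≥ 1, set L = 2^P. For every pair of integers (a, b) with 1 ≤ a < b ≤ L, there exists exactly one integer i with 1 ≤ i ≤ L − 1 such that, writing U = 2^{ν₂(i)}, both i − U + 1 ≤ a ≤ i and i + 1 ≤ b ≤ i + U hold. Moreover this unique i satisfies a ≤ i < b. -/
/-!
Among the iterations in `[a, b)` pick `i` of largest 2-adic valuation `v`. Since `i` is an odd
multiple of `2 ^ v`, its neighbours `i ± 2 ^ v` are multiples of `2 ^ (v + 1)`, so by maximality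
they lie outside `[a, b)`; this is exactly the statement that the tile of `i` contains `(a, b)`.
Two distinct tiles `i < j` cannot share a pair, since that would force `j - i` below both
`2 ^ ν₂ i` and `2 ^ ν₂ j`, whereas the smaller of these powers divides `j - i`.
-/

lemma pow_min_padicValNat_le_sub {p i j : ℕ} [Fact p.Prime] (hij : i < j) :
    p ^ min (padicValNat p i) (padicValNat p j) ≤ j - i :=
  Nat.le_of_dvd (Nat.sub_pos_of_lt hij) <| Nat.dvd_sub
    ((pow_dvd_pow p (min_le_right _ _)).trans pow_padicValNat_dvd)
    ((pow_dvd_pow p (min_le_left _ _)).trans pow_padicValNat_dvd)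

lemma two_pow_succ_padicValNat_dvd_add {i : ℕ} (hi : i ≠ 0) :
    2 ^ (padicValNat 2 i + 1) ∣ i + 2 ^ padicValNat 2 i := by
  obtain ⟨m, hm⟩ : 2 ^ padicValNat 2 i ∣ i := pow_padicValNat_dvd
  have hodd : ¬ 2 ∣ m := fun h2 => pow_succ_padicValNat_not_dvd hi
    (by rw [pow_succ]; exact (Nat.mul_dvd_mul_left _ h2).trans (dvd_of_eq hm.symm))
  obtain ⟨k, hk⟩ : 2 ∣ m + 1 := by omega
  exact ⟨k, by rw [pow_succ, mul_assoc, ← hk]; nth_rw 1 [hm]; ring⟩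

lemma two_pow_succ_padicValNat_dvd_sub {i : ℕ} (hi : i ≠ 0) :
    2 ^ (padicValNat 2 i + 1) ∣ i - 2 ^ padicValNat 2 i := by
  have h := Nat.dvd_sub (two_pow_succ_padicValNat_dvd_add hi) dvd_rfl
  rwa [pow_succ, show i + 2 ^ padicValNat 2 i - 2 ^ padicValNat 2 i * 2 =
    i - 2 ^ padicValNat 2 i by omega, ← pow_succ] at h

-- `i < a + 2 ^ ν₂ i` is the row bound `i - 2 ^ ν₂ i + 1 ≤ a` free of truncated subtraction.
def InTile (i a b : ℕ) : Prop :=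
  i < a + 2 ^ padicValNat 2 i ∧ a ≤ i ∧ i < b ∧ b ≤ i + 2 ^ padicValNat 2 i

lemma InTile.eq {i j a b : ℕ} (hi : InTile i a b) (hj : InTile j a b) : i = j := by
  wlog hij : i ≤ j generalizing i j
  · exact (this hj hi (le_of_not_ge hij)).symm
  refine hij.eq_of_not_lt fun hlt => ?_
  obtain ⟨-, hai, -, hbi⟩ := hi
  obtain ⟨hja, -, hjb, -⟩ := hj
  have hmin := pow_min_padicValNat_le_sub (p := 2) hlt
  rcases min_choice (padicValNat 2 i) (padicValNat 2 j) with h | h <;> rw [h] at hmin <;> omega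

lemma exists_inTile {a b : ℕ} (ha : 0 < a) (hab : a < b) : ∃ i, InTile i a b := by
  obtain ⟨i, hi, hmax⟩ := Finset.exists_max_image _ (padicValNat 2) (Finset.nonempty_Ico.mpr hab)
  obtain ⟨hai, hib⟩ := Finset.mem_Ico.mp hi
  have hi0 : i ≠ 0 := by omega
  have outside {j : ℕ} (hj : j ≠ 0) (hdvd : 2 ^ (padicValNat 2 i + 1) ∣ j) : j ∉ Finset.Ico a b :=
    fun hjm => (padicValNat_dvd_iff_le hj).mp hdvd |>.not_gt (Nat.lt_succ_of_le (hmax j hjm))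
  have hlow : i - 2 ^ padicValNat 2 i < a := by
    by_contra! h
    exact outside (by omega) (two_pow_succ_padicValNat_dvd_sub hi0)
      (Finset.mem_Ico.mpr ⟨h, (Nat.sub_le _ _).trans_lt hib⟩)
  have hhigh : b ≤ i + 2 ^ padicValNat 2 i := by
    by_contra! h
    exact outside (by omega) (two_pow_succ_padicValNat_dvd_add hi0)
      (Finset.mem_Ico.mpr ⟨by omega, h⟩)
  exact ⟨i, by omega, hai, hib, hhigh⟩

theorem flash_inference_tiles_cover_exactly_once_general (P : ℕ) (a b : ℕ)
    (ha : 1 ≤ a) (hab : a < b) (hb : b ≤ 2 ^ P) :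
    ∃! i : ℕ, 1 ≤ i ∧ i ≤ 2 ^ P - 1 ∧
      i - 2 ^ (padicValNat 2 i) + 1 ≤ a ∧ a ≤ i ∧
      i + 1 ≤ b ∧ b ≤ i + 2 ^ (padicValNat 2 i) := by
  obtain ⟨i, hia, hai, hib, hbi⟩ := exists_inTile ha hab
  refine ⟨i, ⟨by omega, by omega, by omega, hai, hib, hbi⟩, ?_⟩
  rintro j ⟨-, -, hja, haj, hjb, hbj⟩
  exact InTile.eq ⟨by omega, haj, hjb, hbj⟩ ⟨hia, hai, hib, hbi⟩

/-- Flash Inference tiling: every strictly-lower-triangular contribution pair `(a, b)`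
with `1 ≤ a < b ≤ L = 2 ^ P` is covered by exactly one gray tile, i.e. there is a unique
iteration `i ∈ [1, L - 1]` such that, with `U = 2 ^ ν₂ i`, we have
`i - U + 1 ≤ a ≤ i` and `i + 1 ≤ b ≤ i + U`; moreover this `i` satisfies `a ≤ i < b`. -/
theorem flash_inference_tiles_cover_exactly_once (P : ℕ) (hP : 1 ≤ P) (a b : ℕ)
    (ha : 1 ≤ a) (hab : a < b) (hb : b ≤ 2 ^ P) :
    ∃! i : ℕ, 1 ≤ i ∧ i ≤ 2 ^ P - 1 ∧
      i - 2 ^ (padicValNat 2 i) + 1 ≤ a ∧ a ≤ i ∧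
      i + 1 ≤ b ∧ b ≤ i + 2 ^ (padicValNat 2 i) :=
  flash_inference_tiles_cover_exactly_once_general P a b ha hab hb
end

section
/- For every integer P ≥ 1, set L = 2^P, and let b be an integer with 1 ≤ b ≤ L. Let S_b = {i : 1 ≤ i ≤ b−1 and b ≤ i + 2^{ν₂(i)}}. Then the list obtained by concatenating, over i ∈ S_b taken in increasing order, the lists (i − 2^{ν₂(i)} + 1, i − 2^{ν₂(i)} + 2, …, i), is exactly the list (1, 2, …, b−1). Consequently, for any monoid M (not necessarily commutative) and any f : ℕ → M, the ordered product ∏_{a=1}^{b−1} f(a) equals the ordered product, over i ∈ S_b in increasing order, of the ordered products ∏_{a=i−2^{ν₂(i)}+1}^{i} f(a). -/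
/-!
Iteration `i` reads inputs `i - lowbit i + 1, …, i` and writes columns `i + 1, …, i + lowbit i`,
where `lowbit i = 2 ^ ν₂ i`. For `n ≥ 1`, the iterations whose tile covers column `n + 1` are
`n` itself together with those covering column `n - lowbit n + 1`. This is the Fenwick-tree
recursion that clears the lowest set bit of `n`. By strong induction the tile inputs, listed in
increasing order of `i`, therefore concatenate to `[1, n - lowbit n] ++ [n - lowbit n + 1, n]`.
The ordered product over them follows because `List.prod` turns concatenation into
multiplication.
-/

theorem Finset.sort_insert_of_forall_lt {α : Type*} [LinearOrder α] {s : Finset α} {a : α}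
    (h : ∀ b ∈ s, b < a) : (insert a s).sort (· ≤ ·) = s.sort (· ≤ ·) ++ [a] := by
  have ha : a ∉ s := fun ha => lt_irrefl a (h a ha)
  refine List.Perm.eq_of_pairwise' (Finset.pairwise_sort _ _) ?_ ?_
  · rw [List.pairwise_append]
    refine ⟨Finset.pairwise_sort _ _, List.pairwise_singleton _ _, ?_⟩
    intro b hb c hc
    rw [List.mem_singleton.mp hc]
    exact (h b ((Finset.mem_sort _).mp hb)).le
  · exact (Finset.sort_perm_toList _ _).trans <| (Finset.toList_insert ha).trans <|
      ((Finset.sort_perm_toList _ _).symm.cons a).trans (List.perm_append_singleton _ _).symm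

theorem Nat.add_le_of_dvd_of_dvd_of_lt {d a b : ℕ} (ha : d ∣ a) (hb : d ∣ b) (h : a < b) :
    a + d ≤ b := by
  obtain ⟨k, rfl⟩ := ha
  obtain ⟨l, rfl⟩ := hb
  have : k + 1 ≤ l := Nat.lt_of_mul_lt_mul_left h
  nlinarith

theorem Nat.two_mul_dvd_sub_of_dvd_of_not_two_mul_dvd {d n : ℕ} (hd : d ∣ n)
    (hn : ¬ 2 * d ∣ n) : 2 * d ∣ n - d := by
  obtain ⟨m, rfl⟩ := hd
  have hm : ¬ 2 ∣ m := fun h2 => hn (by rw [mul_comm 2 d]; exact mul_dvd_mul_left d h2)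
  obtain ⟨k, rfl⟩ : Odd m := Nat.odd_iff.mpr (Nat.two_dvd_ne_zero.mp hm)
  exact ⟨k, by rw [mul_add, mul_one, Nat.add_sub_cancel]; ring⟩

namespace FlashInference

/-- `lowbit 0 = 1`, since `padicValNat 2 0 = 0`. -/
abbrev lowbit (n : ℕ) : ℕ := 2 ^ padicValNat 2 n

theorem lowbit_pos (n : ℕ) : 0 < lowbit n := Nat.two_pow_pos _

theorem lowbit_dvd (n : ℕ) : lowbit n ∣ n := pow_padicValNat_dvd

theorem lowbit_dvd_of_padicValNat_le {m n : ℕ} (h : padicValNat 2 m ≤ padicValNat 2 n) :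
    lowbit m ∣ n :=
  (pow_dvd_pow 2 h).trans (lowbit_dvd n)

theorem two_mul_lowbit_dvd_lowbit {m n : ℕ} (h : padicValNat 2 m < padicValNat 2 n) :
    2 * lowbit m ∣ lowbit n := by
  rw [lowbit, ← pow_succ']
  exact pow_dvd_pow 2 h

theorem not_two_mul_lowbit_dvd {n : ℕ} (hn : n ≠ 0) : ¬ 2 * lowbit n ∣ n := by
  rw [lowbit, ← pow_succ']
  exact pow_succ_padicValNat_not_dvd hn

theorem padicValNat_lt_padicValNat_sub_lowbit {n : ℕ} (h : lowbit n < n) :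
    padicValNat 2 n < padicValNat 2 (n - lowbit n) := by
  rw [← Nat.succ_le_iff, ← padicValNat_dvd_iff_le (by omega), pow_succ']
  exact Nat.two_mul_dvd_sub_of_dvd_of_not_two_mul_dvd (lowbit_dvd n)
    (not_two_mul_lowbit_dvd (by omega))

theorem padicValNat_lt_of_lt_of_lt_add_lowbit {i n : ℕ} (hi : i < n) (hn : n < i + lowbit i) :
    padicValNat 2 n < padicValNat 2 i := by
  by_contra! h
  have := Nat.add_le_of_dvd_of_dvd_of_lt (lowbit_dvd i) (lowbit_dvd_of_padicValNat_le h) hi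
  omega

/-- Both directions go through `ν₂ n < ν₂ i`, which makes `i` and `lowbit i` multiples of
`2 * lowbit n` while `n` is not one. -/
theorem lt_add_lowbit_iff {i n : ℕ} (hi : 0 < i) (hin : i < n) :
    n < i + lowbit i ↔ i ≤ n - lowbit n ∧ n - lowbit n < i + lowbit i := by
  have hn := lowbit_dvd n
  have hle : lowbit n ≤ n := Nat.le_of_dvd (by omega) hn
  constructor
  · intro h
    have hi := lowbit_dvd_of_padicValNat_le (padicValNat_lt_of_lt_of_lt_add_lowbit hin h).le
    have := Nat.add_le_of_dvd_of_dvd_of_lt hi hn hin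
    omega
  · rintro ⟨h₁, h₂⟩
    have hv : padicValNat 2 n < padicValNat 2 i := by
      rcases h₁.lt_or_eq with h₁ | rfl
      · exact (padicValNat_lt_padicValNat_sub_lowbit (by omega)).trans
          (padicValNat_lt_of_lt_of_lt_add_lowbit h₁ h₂)
      · exact padicValNat_lt_padicValNat_sub_lowbit (by omega)
    have h2q := two_mul_lowbit_dvd_lowbit hv
    have h2i := h2q.trans (lowbit_dvd i)
    have hni : n ≤ i + lowbit i := by
      have := Nat.add_le_of_dvd_of_dvd_of_lt (Nat.dvd_sub hn dvd_rfl)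
        (((dvd_mul_left _ 2).trans h2i).add ((dvd_mul_left _ 2).trans h2q)) h₂
      omega
    refine hni.lt_of_ne fun h => not_two_mul_lowbit_dvd (n := n) (by omega) ?_
    exact h ▸ h2i.add h2q

/-- The paper's `S_{n+1}`. -/
def coveringTiles (n : ℕ) : Finset ℕ := (Finset.Icc 1 n).filter (fun i => n < i + lowbit i)

def tile (i : ℕ) : List ℕ := List.range' (i - lowbit i + 1) (lowbit i)

theorem le_of_mem_coveringTiles {n i : ℕ} (hi : i ∈ coveringTiles n) : i ≤ n :=
  (Finset.mem_Icc.mp (Finset.mem_filter.mp hi).1).2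

theorem coveringTiles_eq_insert {n : ℕ} (hn : 0 < n) :
    coveringTiles n = insert n (coveringTiles (n - lowbit n)) := by
  ext i
  simp only [coveringTiles, Finset.mem_insert, Finset.mem_filter, Finset.mem_Icc]
  have := lowbit_pos i
  rcases lt_trichotomy i n with hi | rfl | hi
  · constructor
    · rintro ⟨⟨h₁, -⟩, h⟩
      have := (lt_add_lowbit_iff h₁ hi).mp h
      omega
    · rintro (h | ⟨⟨h₁, h₂⟩, h⟩)
      · omega
      · exact ⟨⟨h₁, hi.le⟩, (lt_add_lowbit_iff h₁ hi).mpr ⟨h₂, h⟩⟩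
  · omega
  · omega

theorem flatMap_tile_coveringTiles (n : ℕ) :
    ((coveringTiles n).sort (· ≤ ·)).flatMap tile = List.range' 1 n := by
  induction n using Nat.strong_induction_on with
  | _ n ih =>
    rcases Nat.eq_zero_or_pos n with rfl | hn
    · simp [coveringTiles]
    have hle : lowbit n ≤ n := Nat.le_of_dvd hn (lowbit_dvd n)
    have hlt : n - lowbit n < n := Nat.sub_lt hn (lowbit_pos n)
    rw [coveringTiles_eq_insert hn, Finset.sort_insert_of_forall_lt
      fun i hi => (le_of_mem_coveringTiles hi).trans_lt hlt, List.flatMap_append,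
      ih _ hlt, List.flatMap_singleton, tile,
      show n - lowbit n + 1 = 1 + 1 * (n - lowbit n) by omega, List.range'_append,
      Nat.sub_add_cancel hle]

end FlashInference

theorem tiles_aggregate_in_order_general (b : ℕ) :
    (((Finset.Icc 1 (b - 1)).filter
          (fun i => b ≤ i + 2 ^ (padicValNat 2 i))).sort (· ≤ ·)).flatMap
        (fun i => List.range' (i - 2 ^ (padicValNat 2 i) + 1) (2 ^ (padicValNat 2 i)))
      = List.range' 1 (b - 1) ∧
    ∀ (M : Type*) [Monoid M] (f : ℕ → M),
      ((List.range' 1 (b - 1)).map f).prod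
        = ((((Finset.Icc 1 (b - 1)).filter
              (fun i => b ≤ i + 2 ^ (padicValNat 2 i))).sort (· ≤ ·)).map
            (fun i =>
              ((List.range' (i - 2 ^ (padicValNat 2 i) + 1)
                  (2 ^ (padicValNat 2 i))).map f).prod)).prod := by
  rcases b with _ | n
  · simp
  simp only [Nat.add_sub_cancel]
  have key : ((FlashInference.coveringTiles n).sort (· ≤ ·)).flatMap FlashInference.tile =
      List.range' 1 n :=
    FlashInference.flatMap_tile_coveringTiles n
  refine ⟨key, fun M _ f => ?_⟩
  rw [← key]
  simp only [List.flatMap, List.map_flatten, List.prod_flatten, List.map_map]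
  rfl

/-- For an output column `b` with `1 ≤ b ≤ 2 ^ P`, concatenating — over the iterations
`i ∈ S_b = {i : 1 ≤ i ≤ b - 1, b ≤ i + 2 ^ ν₂ i}` in increasing order — the input
intervals `(i - 2 ^ ν₂ i + 1, …, i)` of the corresponding gray tiles yields exactly the
list `(1, 2, …, b - 1)`. Consequently, for any (not necessarily commutative) monoid `M`
and any `f : ℕ → M`, the ordered product `∏_{a=1}^{b-1} f a` equals the ordered product
over `i ∈ S_b` (in increasing order) of the ordered products of `f` over the tile
intervals. -/
theorem tiles_aggregate_in_order (P : ℕ) (hP : 1 ≤ P) (b : ℕ) (hb1 : 1 ≤ b)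
    (hb2 : b ≤ 2 ^ P) :
    (((Finset.Icc 1 (b - 1)).filter
          (fun i => b ≤ i + 2 ^ (padicValNat 2 i))).sort (· ≤ ·)).flatMap
        (fun i => List.range' (i - 2 ^ (padicValNat 2 i) + 1) (2 ^ (padicValNat 2 i)))
      = List.range' 1 (b - 1) ∧
    ∀ (M : Type*) [Monoid M] (f : ℕ → M),
      ((List.range' 1 (b - 1)).map f).prod
        = ((((Finset.Icc 1 (b - 1)).filter
              (fun i => b ≤ i + 2 ^ (padicValNat 2 i))).sort (· ≤ ·)).map
            (fun i =>
              ((List.range' (i - 2 ^ (padicValNat 2 i) + 1)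
                  (2 ^ (padicValNat 2 i))).map f).prod)).prod :=
  tiles_aggregate_in_order_general b
end

section
/- For every integer P ≥ 1, set L = 2^P, and let b be an integer with 2 ≤ b ≤ L. Let S_b = {i : 1 ≤ i ≤ b−1 and b ≤ i + 2^{ν₂(i)}}. Then the intervals [i − 2^{ν₂(i)} + 1, i] for i ∈ S_b are pairwise disjoint, and their union is exactly the set of integers {1, 2, …, b−1}. -/
/-- 2-adic valuation of an odd multiple of `2^u` is `u`. -/
lemma val2_odd_mul_pow (m u : ℕ) : padicValNat 2 ((2 * m + 1) * 2 ^ u) = u := by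
  rw [padicValNat.mul (by omega) (by positivity), padicValNat.prime_pow,
    padicValNat.eq_zero_of_not_dvd (by omega)]
  omega

/-- Every positive `j` is an odd multiple of `2 ^ padicValNat 2 j`. -/
lemma exists_odd_mul (j : ℕ) (hj : 1 ≤ j) :
    ∃ n, j = (2 * n + 1) * 2 ^ padicValNat 2 j := by
  set u := padicValNat 2 j with hu
  have hd : 2 ^ u ∣ j := by
    have := Nat.ordProj_dvd j 2
    rwa [Nat.factorization_def j Nat.prime_two] at this
  have hnd : ¬ 2 ∣ j / 2 ^ u := by
    have := Nat.not_dvd_ordCompl Nat.prime_two (by omega : j ≠ 0)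
    rwa [Nat.factorization_def j Nat.prime_two] at this
  obtain ⟨q, hq⟩ := hd
  have hq' : j / 2 ^ u = q := by
    rw [hq]; exact Nat.mul_div_cancel_left q (by positivity)
  rw [hq'] at hnd
  have hodd : q = 2 * (q / 2) + 1 := by omega
  refine ⟨q / 2, ?_⟩
  rw [hq, ← hodd, mul_comm]

/-- Decoding: a tile `j ∈ S_b` containing `x` is determined by the splitting level. -/
lemma decode (b x j : ℕ) (hx1 : 1 ≤ x) (hb : 2 ≤ b) (hj1 : 1 ≤ j) (hjb : j ≤ b - 1)
    (hbj : b ≤ j + 2 ^ padicValNat 2 j) (hxl : j - 2 ^ padicValNat 2 j + 1 ≤ x) (hxr : x ≤ j) :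
    (x - 1) / 2 ^ (padicValNat 2 j + 1) = (b - 1) / 2 ^ (padicValNat 2 j + 1) ∧
    (x - 1) / 2 ^ (padicValNat 2 j) ≠ (b - 1) / 2 ^ (padicValNat 2 j) ∧
    j = (2 * ((b - 1) / 2 ^ (padicValNat 2 j + 1)) + 1) * 2 ^ (padicValNat 2 j) := by
  obtain ⟨n, hn⟩ := exists_odd_mul j hj1
  set u := padicValNat 2 j with hu
  set t := 2 ^ u with htdef
  have ht : 0 < t := by positivity
  set N := n * t with hN
  have hjN : j = 2 * N + t := by rw [hn]; ring
  have e1 : n * (t * 2) = 2 * N := by ring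
  have e2 : (n + 1) * (t * 2) = 2 * N + 2 * t := by ring
  have e3 : (2 * n) * t = 2 * N := by ring
  have e4 : (2 * n + 1) * t = 2 * N + t := by ring
  have hpow : 2 ^ (u + 1) = t * 2 := by rw [pow_succ]
  have ha1 : (x - 1) / (t * 2) = n :=
    Nat.div_eq_of_lt_le (by omega) (by rw [e2]; omega)
  have hc1 : (b - 1) / (t * 2) = n :=
    Nat.div_eq_of_lt_le (by omega) (by rw [e2]; omega)
  have ha2 : (x - 1) / t = 2 * n :=
    Nat.div_eq_of_lt_le (by rw [e3]; omega) (by rw [e4]; omega)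
  have hc2 : 2 * n + 1 ≤ (b - 1) / t :=
    (Nat.le_div_iff_mul_le ht).mpr (by rw [e4]; omega)
  refine ⟨?_, ?_, ?_⟩
  · rw [hpow, ha1, hc1]
  · rw [ha2]; omega
  · rw [hpow, hc1]; exact hn

/-- The splitting level is unique. -/
lemma level_unique {a c u u' : ℕ} (h1 : a / 2 ^ (u + 1) = c / 2 ^ (u + 1))
    (h2 : a / 2 ^ u' ≠ c / 2 ^ u') : u' ≤ u := by
  by_contra h
  push_neg at h
  have hpow : 2 ^ u' = 2 ^ (u + 1) * 2 ^ (u' - (u + 1)) := by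
    rw [← pow_add]; congr 1; omega
  apply h2
  rw [hpow, ← Nat.div_div_eq_div_mul, ← Nat.div_div_eq_div_mul, h1]

/-- Encoding: every `x ∈ [1, b-1]` lies in the tile of some `i ∈ S_b`. -/
lemma encode (P b x : ℕ) (hx1 : 1 ≤ x) (hx2 : x ≤ b - 1) (hb : 2 ≤ b) (hb2 : b ≤ 2 ^ P) :
    ∃ i, 1 ≤ i ∧ i ≤ b - 1 ∧ b ≤ i + 2 ^ padicValNat 2 i ∧
      i - 2 ^ padicValNat 2 i + 1 ≤ x ∧ x ≤ i := by
  set a := x - 1 with hadef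
  set c := b - 1 with hcdef
  have hac : a < c := by omega
  have hex : ∃ w, a / 2 ^ w = c / 2 ^ w := by
    refine ⟨P, ?_⟩
    rw [Nat.div_eq_of_lt (by omega), Nat.div_eq_of_lt (by omega)]
  set w := Nat.find hex with hwdef
  have hw : a / 2 ^ w = c / 2 ^ w := Nat.find_spec hex
  have hw0 : w ≠ 0 := by
    intro h0
    rw [h0] at hw; simp at hw; omega
  set u := w - 1 with hudef
  have hmin : a / 2 ^ u ≠ c / 2 ^ u := Nat.find_min hex (by omega)
  set t := 2 ^ u with htdef
  have ht : 0 < t := by positivity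
  have hpow : 2 ^ w = t * 2 := by
    rw [htdef, ← pow_succ]; congr 1; omega
  rw [hpow] at hw
  set m := c / (t * 2) with hm
  have ha2 : a / t / 2 = m := by rw [Nat.div_div_eq_div_mul, hw]
  have hc2 : c / t / 2 = m := by rw [Nat.div_div_eq_div_mul]
  have hle : a / t ≤ c / t := Nat.div_le_div_right (le_of_lt hac)
  have hA : a / t = 2 * m := by omega
  have hC : c / t = 2 * m + 1 := by omega
  set M := m * t with hM
  have e3 : (2 * m) * t = 2 * M := by ring
  have e4 : (2 * m + 1) * t = 2 * M + t := by ring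
  have e2 : (m + 1) * (t * 2) = 2 * M + 2 * t := by ring
  have hal : 2 * M ≤ a := by
    have := Nat.div_mul_le_self a t
    rw [hA, e3] at this; omega
  have hau : a < 2 * M + t := by
    have : a / t < 2 * m + 1 := by omega
    have := (Nat.div_lt_iff_lt_mul ht).mp this
    rw [e4] at this; omega
  have hcl : 2 * M + t ≤ c := by
    have := Nat.div_mul_le_self c t
    rw [hC, e4] at this; omega
  have hcu : c < 2 * M + 2 * t := by
    have : c / (t * 2) < m + 1 := by omega
    have := (Nat.div_lt_iff_lt_mul (by positivity)).mp this
    rw [e2] at this; omega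
  have hval : padicValNat 2 ((2 * m + 1) * t) = u := by
    rw [htdef]; exact val2_odd_mul_pow m u
  refine ⟨(2 * m + 1) * t, ?_, ?_, ?_, ?_, ?_⟩ <;>
    (try simp only [hval, ← htdef]) <;> (try simp only [e4]) <;> omega

/-- For a fixed output column `b` with `2 ≤ b ≤ 2 ^ P`, the input intervals
`[i - 2 ^ ν₂ i + 1, i]` of the gray tiles `i ∈ S_b = {i : 1 ≤ i ≤ b - 1, b ≤ i + 2 ^ ν₂ i}`
covering column `b` are pairwise disjoint, and their union is exactly `{1, …, b - 1}`. -/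
theorem tiles_partition_column (P : ℕ) (hP : 1 ≤ P) (b : ℕ) (hb1 : 2 ≤ b)
    (hb2 : b ≤ 2 ^ P) :
    (∀ i ∈ (Finset.Icc 1 (b - 1)).filter (fun i => b ≤ i + 2 ^ (padicValNat 2 i)),
      ∀ j ∈ (Finset.Icc 1 (b - 1)).filter (fun j => b ≤ j + 2 ^ (padicValNat 2 j)),
        i ≠ j →
          Disjoint (Finset.Icc (i - 2 ^ (padicValNat 2 i) + 1) i)
            (Finset.Icc (j - 2 ^ (padicValNat 2 j) + 1) j)) ∧
    ((Finset.Icc 1 (b - 1)).filter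
        (fun i => b ≤ i + 2 ^ (padicValNat 2 i))).biUnion
        (fun i => Finset.Icc (i - 2 ^ (padicValNat 2 i) + 1) i)
      = Finset.Icc 1 (b - 1) := by
  constructor
  · intro i hi j hj hij
    rw [Finset.mem_filter, Finset.mem_Icc] at hi hj
    rw [Finset.disjoint_left]
    intro x hxi hxj
    rw [Finset.mem_Icc] at hxi hxj
    have hx1 : 1 ≤ x := by omega
    obtain ⟨di1, di2, di3⟩ := decode b x i hx1 hb1 hi.1.1 hi.1.2 hi.2 hxi.1 hxi.2
    obtain ⟨dj1, dj2, dj3⟩ := decode b x j hx1 hb1 hj.1.1 hj.1.2 hj.2 hxj.1 hxj.2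
    have h1 : padicValNat 2 j ≤ padicValNat 2 i := level_unique di1 dj2
    have h2 : padicValNat 2 i ≤ padicValNat 2 j := level_unique dj1 di2
    have heq : padicValNat 2 i = padicValNat 2 j := le_antisymm h2 h1
    apply hij
    rw [di3, dj3, heq]
  · ext x
    rw [Finset.mem_biUnion, Finset.mem_Icc]
    constructor
    · rintro ⟨i, hi, hx⟩
      rw [Finset.mem_filter, Finset.mem_Icc] at hi
      rw [Finset.mem_Icc] at hx
      omega
    · rintro ⟨hx1, hx2⟩
      obtain ⟨i, h1, h2, h3, h4, h5⟩ := encode P b x hx1 hx2 hb1 hb2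
      exact ⟨i, by rw [Finset.mem_filter, Finset.mem_Icc]; exact ⟨⟨h1, h2⟩, h3⟩,
        by rw [Finset.mem_Icc]; exact ⟨h4, h5⟩⟩
end
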